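/- arXiv:2212.03321 — 2 statements merged into one kernel-verified Lean document; each statement's English description precedes it below -/
import Mathlib

section
/- Let A be a real n×n matrix with trace A = 0 and let η : ℝⁿ → ℝ be differentiable at z ∈ ℝⁿ. Then the determinant of the Fréchet derivative at z of the map F(w) := exp(η(w)·A)·w equals 1 + dη_z(A·z), where dη_z is the Fréchet derivative of η at z. -/
/-! Since `A` commutes with `exp (s • A)`, the chain and product rules give
`dF_z v = exp (η z • A) (v + η' v • A z)`. The first factor has determinant
`exp (η z * trace A) = 1`, because `t ↦ det (exp (t • B))` solves `f' = (trace B) f`; the second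
has determinant `1 + η' (A z)` by the matrix determinant lemma. -/

/-- Application of an `n × n` real matrix to a vector of `ℝⁿ` (with its standard
Euclidean structure) by matrix-vector multiplication. -/
noncomputable def matApp {n : ℕ} (A : Matrix (Fin n) (Fin n) ℝ)
    (z : EuclideanSpace ℝ (Fin n)) : EuclideanSpace ℝ (Fin n) :=
  Matrix.toEuclideanLin A z

open NormedSpace

namespace Matrix

variable {n : Type*} [Fintype n] [DecidableEq n]

theorem sum_det_updateRow_mul {R : Type*} [CommRing R] (B M : Matrix n n R) :
    ∑ i, (M.updateRow i ((B * M) i)).det = B.trace * M.det := by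
  have hrow : ∀ i, (B * M) i = ∑ k, B i k • M k := fun i => by
    ext j
    simp [mul_apply, Finset.sum_apply]
  simp_rw [hrow, det_updateRow_sum, smul_eq_mul, ← Finset.sum_mul, trace, diag]

theorem hasDerivAt_det {𝕜 : Type*} [NontriviallyNormedField 𝕜] {f : 𝕜 → Matrix n n 𝕜}
    {f' : Matrix n n 𝕜} {t : 𝕜} (hf : ∀ i j, HasDerivAt (fun t => f t i j) (f' i j) t) :
    HasDerivAt (fun t => (f t).det) (∑ i, ((f t).updateRow i (f' i)).det) t := by
  let D : ContinuousMultilinearMap 𝕜 (fun _ : n => n → 𝕜) 𝕜 :=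
    ⟨detRowAlternating.toMultilinearMap, continuous_id.matrix_det⟩
  have hrows : HasDerivAt (fun t i => f t i) (fun i => f' i) t :=
    hasDerivAt_pi.2 fun i => hasDerivAt_pi.2 fun j => hf i j
  exact ((D.hasFDerivAt (f t)).comp_hasDerivAt t hrows).congr_deriv
    (ContinuousMultilinearMap.linearDeriv_apply _ _ _)

open scoped Norms.Operator in
theorem det_exp (B : Matrix n n ℝ) : (exp B).det = Real.exp B.trace := by
  set g : ℝ → ℝ := fun t => (exp (t • B)).det
  have hg : ∀ t, HasDerivAt g (B.trace * g t) t := fun t => by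
    have hentry : ∀ i j, HasDerivAt (fun t => exp (t • B) i j) ((B * exp (t • B)) i j) t :=
      fun i j => (entryLinearMap ℝ ℝ i j).toContinuousLinearMap.hasFDerivAt.comp_hasDerivAt t
        (hasDerivAt_exp_smul_const' B t)
    simpa only [sum_det_updateRow_mul] using hasDerivAt_det hentry
  have hconst : ∀ t, HasDerivAt (fun t => Real.exp (-(t * B.trace)) * g t) 0 t := fun t =>
    (((hasDerivAt_id t).mul_const B.trace).neg.exp.mul (hg t)).congr_deriv (by ring)
  have h10 := is_const_of_deriv_eq_zero (fun t => (hconst t).differentiableAt)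
    (fun t => (hconst t).deriv) 1 0
  simp only [g, one_mul, one_smul, zero_mul, zero_smul, neg_zero, Real.exp_zero, exp_zero,
    det_one, Real.exp_neg] at h10
  field_simp at h10
  exact h10

open scoped Norms.Operator in
theorem toEuclideanCLM_exp (M : Matrix n n ℝ) :
    toEuclideanCLM (𝕜 := ℝ) (exp M) = exp (toEuclideanCLM (𝕜 := ℝ) M) :=
  map_exp (toEuclideanCLM (𝕜 := ℝ) (n := n))
    (toEuclideanCLM (𝕜 := ℝ) (n := n)).toAlgEquiv.toLinearMap.continuous_of_finiteDimensional M

theorem det_toEuclideanCLM (M : Matrix n n ℝ) : (toEuclideanCLM (𝕜 := ℝ) M).det = M.det :=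
  LinearMap.det_toLin _ M

end Matrix

theorem LinearMap.det_id_add_smulRight {R M : Type*} [CommRing R] [AddCommGroup M] [Module R M]
    [Module.Free R M] [Module.Finite R M] (f : M →ₗ[R] R) (v : M) :
    LinearMap.det (LinearMap.id + f.smulRight v) = 1 + f v := by
  classical
  let b := Module.Free.chooseBasis R M
  have hmat : LinearMap.toMatrix b b (LinearMap.id + f.smulRight v) =
      1 + Matrix.vecMulVec (b.repr v) (fun j => f (b j)) := by
    ext i j
    simp [LinearMap.toMatrix_apply, Matrix.vecMulVec_apply, Matrix.one_apply, Finsupp.single_apply,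
      mul_comm, eq_comm]
  rw [← LinearMap.det_toMatrix b, hmat, Matrix.vecMulVec_eq Unit,
    Matrix.det_one_add_replicateCol_mul_replicateRow]
  congr 1
  calc (fun j => f (b j)) ⬝ᵥ b.repr v = f (∑ j, b.repr v j • b j) := by
        simp only [dotProduct, map_sum, map_smul, smul_eq_mul, mul_comm]
    _ = f v := by rw [b.sum_repr]

theorem hasFDerivAt_exp_smul_apply {E : Type*} [NormedAddCommGroup E] [NormedSpace ℝ E]
    [CompleteSpace E] (A : E →L[ℝ] E) {η : E → ℝ} {η' : E →L[ℝ] ℝ} {z : E}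
    (hη : HasFDerivAt η η' z) :
    HasFDerivAt (fun w => exp (η w • A) w)
      (exp (η z • A) ∘L (ContinuousLinearMap.id ℝ E + η'.smulRight (A z))) z := by
  have hexp : HasFDerivAt (fun w => exp (η w • A)) (η'.smulRight (exp (η z • A) * A)) z :=
    (hasDerivAt_exp_smul_const A (η z)).hasFDerivAt.comp z hη
  refine (hexp.clm_apply (hasFDerivAt_id z)).congr_fderiv ?_
  ext v
  simp

/-- If `A` is a real `n × n` matrix with `trace A = 0` and `η : ℝⁿ → ℝ` is
differentiable at `z` with Fréchet derivative `η'`, then the determinant of the Fréchet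
derivative at `z` of `F(w) = exp(η(w)·A)·w` equals `1 + η'(A·z)`. -/
theorem stmt8 {n : ℕ} (A : Matrix (Fin n) (Fin n) ℝ) (htr : A.trace = 0)
    (η : EuclideanSpace ℝ (Fin n) → ℝ) (z : EuclideanSpace ℝ (Fin n))
    (η' : EuclideanSpace ℝ (Fin n) →L[ℝ] ℝ) (hη : HasFDerivAt η η' z) :
    (fderiv ℝ (fun w => matApp (NormedSpace.exp (η w • A)) w) z).det =
      1 + η' (matApp A z) := by
  set T := Matrix.toEuclideanCLM (𝕜 := ℝ) (n := Fin n)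
  have hF : (fun w => matApp (exp (η w • A)) w) = fun w => exp (η w • T A) w := by
    ext1 w
    rw [← map_smul, ← Matrix.toEuclideanCLM_exp]
    rfl
  have hdet : (exp (η z • T A)).det = 1 := by
    rw [← map_smul, ← Matrix.toEuclideanCLM_exp, Matrix.det_toEuclideanCLM, Matrix.det_exp,
      Matrix.trace_smul, htr, smul_zero, Real.exp_zero]
  have hrank : (ContinuousLinearMap.id ℝ _ + η'.smulRight (T A z)).det = 1 + η' (T A z) := by
    rw [ContinuousLinearMap.det, ContinuousLinearMap.toLinearMap_add, ContinuousLinearMap.coe_id]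
    exact LinearMap.det_id_add_smulRight _ _
  rw [hF, (hasFDerivAt_exp_smul_apply (T A) hη).fderiv, ContinuousLinearMap.det,
    ContinuousLinearMap.toLinearMap_comp, LinearMap.det_comp, ← ContinuousLinearMap.det,
    ← ContinuousLinearMap.det, hdet, hrank, one_mul]
  rfl
end

section
/- Let φ : ℝⁿ → ℝ be continuously differentiable, α : ℝ → ℝ continuously differentiable with α(0) = 0 and α'(0) = 0, let A be a real n×n matrix and k, γ ∈ ℝ. Then the piecewise-defined warping map S : ℝⁿ → ℝⁿ given by S(z) = z if φ(z) ≤ γ, and S(z) = exp(k·α(φ(z)−γ)·A)·z if φ(z) > γ, is continuously differentiable (C¹) on all of ℝⁿ. -/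
/-!
Since `α 0 = 0`, the warping map agrees everywhere with `z ↦ exp (k β(φ z - γ) A) z` for
`β t = α (max t 0)`, the matrix exponential being transported to operators on `ℝⁿ`. The
conditions `α 0 = 0` and `α' 0 = 0` glue `β` into a `C¹` function with continuous derivative
`t ↦ α' (max t 0)`, and the rest is composition of `C¹` maps with the analytic exponential.
-/

open NormedSpace Set Matrix

section MaxZero

variable {F : Type*} [NormedAddCommGroup F] [NormedSpace ℝ F] {α : ℝ → F}

theorem hasDerivAt_comp_max_zero (hα : Differentiable ℝ α) (hα0 : α 0 = 0)
    (hα'0 : deriv α 0 = 0) (t : ℝ) :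
    HasDerivAt (fun s => α (max s 0)) (deriv α (max t 0)) t := by
  rcases lt_trichotomy t 0 with ht | rfl | ht
  · rw [max_eq_right ht.le, hα'0]
    refine (hasDerivAt_const t (0 : F)).congr_of_eventuallyEq ?_
    filter_upwards [Iio_mem_nhds ht] with s hs
    rw [max_eq_right (le_of_lt hs), hα0]
  · rw [max_self, hα'0, ← hasDerivWithinAt_univ, ← Iic_union_Ici]
    refine .union ?_ ?_
    · refine (hasDerivWithinAt_const 0 _ (0 : F)).congr (fun s hs => ?_) (by simp [hα0])
      rw [max_eq_right hs, hα0]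
    · have h := (hα 0).hasDerivAt.hasDerivWithinAt (s := Ici 0)
      rw [hα'0] at h
      exact h.congr (fun s hs => by rw [max_eq_left hs]) (by simp)
  · rw [max_eq_left ht.le]
    refine (hα t).hasDerivAt.congr_of_eventuallyEq ?_
    filter_upwards [Ioi_mem_nhds ht] with s hs
    rw [max_eq_left (le_of_lt hs)]

theorem contDiff_one_comp_max_zero (hα : ContDiff ℝ 1 α) (hα0 : α 0 = 0)
    (hα'0 : deriv α 0 = 0) : ContDiff ℝ 1 (fun t => α (max t 0)) := by
  have hderiv := hasDerivAt_comp_max_zero (hα.differentiable one_ne_zero) hα0 hα'0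
  rw [contDiff_one_iff_deriv]
  refine ⟨fun t => (hderiv t).differentiableAt, ?_⟩
  rw [funext fun t => (hderiv t).deriv]
  exact (hα.continuous_deriv le_rfl).comp (continuous_id.max continuous_const)

end MaxZero

theorem Matrix.toEuclideanCLM_exp_s10 {𝕜 m : Type*} [RCLike 𝕜] [Fintype m] [DecidableEq m]
    (M : Matrix m m 𝕜) :
    toEuclideanCLM (n := m) (𝕜 := 𝕜) (exp M) = exp (toEuclideanCLM (n := m) (𝕜 := 𝕜) M) :=
  -- any norm on matrices makes `map_exp` applicable; `exp` itself only sees the topology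
  open scoped Norms.Operator in
  map_exp (toEuclideanCLM (n := m) (𝕜 := 𝕜))
    (toEuclideanCLM (n := m) (𝕜 := 𝕜)).toAlgEquiv.toLinearMap.continuous_of_finiteDimensional M

theorem contDiff_exp_smul_apply {𝕜 E : Type*} [RCLike 𝕜] [NormedAddCommGroup E]
    [NormedSpace 𝕜 E] [CompleteSpace E] {n : WithTop ℕ∞} {c : E → 𝕜}
    (hc : ContDiff 𝕜 n c) (B : E →L[𝕜] E) : ContDiff 𝕜 n fun z => exp (c z • B) z := by
  have hexp : ContDiff 𝕜 n (exp : (E →L[𝕜] E) → E →L[𝕜] E) :=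
    contDiff_iff_contDiffAt.2 fun x => (exp_analytic (𝕂 := 𝕜) x).contDiffAt
  exact (hexp.comp (hc.smul contDiff_const)).clm_apply contDiff_id

/-- If `φ : ℝⁿ → ℝ` is `C¹`, `α : ℝ → ℝ` is `C¹` with `α(0) = 0` and
`α'(0) = 0`, `A` is a real `n × n` matrix and `k, γ ∈ ℝ`, then the piecewise warping map
`S(z) = z` if `φ(z) ≤ γ`, `S(z) = exp(k·α(φ(z)−γ)·A)·z` if `φ(z) > γ`, is `C¹` on `ℝⁿ`. -/
theorem stmt10 {n : ℕ} (φ : EuclideanSpace ℝ (Fin n) → ℝ) (hφ : ContDiff ℝ 1 φ)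
    (α : ℝ → ℝ) (hα : ContDiff ℝ 1 α) (hα0 : α 0 = 0) (hα'0 : deriv α 0 = 0)
    (A : Matrix (Fin n) (Fin n) ℝ) (k γ : ℝ) :
    ContDiff ℝ 1 (fun z : EuclideanSpace ℝ (Fin n) =>
      if φ z ≤ γ then z
      else matApp (NormedSpace.exp ((k * α (φ z - γ)) • A)) z) := by
  have hS : (fun z : EuclideanSpace ℝ (Fin n) =>
      if φ z ≤ γ then z else matApp (exp ((k * α (φ z - γ)) • A)) z) =
      fun z => exp ((k * α (max (φ z - γ) 0)) • toEuclideanCLM (n := Fin n) (𝕜 := ℝ) A) z := by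
    funext z
    rw [← map_smul, ← toEuclideanCLM_exp_s10]
    split_ifs with h
    · rw [max_eq_right (sub_nonpos.mpr h), hα0, mul_zero, zero_smul, exp_zero, map_one]
      rfl
    · rw [max_eq_left (sub_nonneg.mpr (not_le.mp h).le)]
      rfl
  rw [hS]
  exact contDiff_exp_smul_apply
    (contDiff_const.mul ((contDiff_one_comp_max_zero hα hα0 hα'0).comp (hφ.sub contDiff_const))) _
end
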